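/- There exists a constant C > 0 depending only on n with the following property: for every n ≥ 3 and every Kähler curvature-type tensor R on ℂ^n whose traceless bisectional curvature operator is 2-nonnegative, one has |R(i,j,k,l)| ≤ C·r for all indices i, j, k, l, where r is the scalar curvature of R (in particular r ≥ 0). -/

import Mathlib

open BigOperators

/-- A Kähler curvature-type tensor on `ℂ^n`: `R i j k l` stands for `R_{i j̄ k l̄}` in a
unitary frame, with the symmetries `R_{i j̄ k l̄} = R_{k j̄ i l̄}`, `R_{i j̄ k l̄} = R_{i l̄ k j̄}`
and the reality condition `conj R_{i j̄ k l̄} = R_{j ī l k̄}`. -/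
def IsKahlerCurvTensor {n : ℕ} (R : Fin n → Fin n → Fin n → Fin n → ℂ) : Prop :=
  (∀ i j k l, R i j k l = R k j i l) ∧
  (∀ i j k l, R i j k l = R i l k j) ∧
  (∀ i j k l, starRingEnd ℂ (R i j k l) = R j i l k)

/-- The Ricci tensor `Ric(i,j) = Σ_k R(i,j,k,k)` of a curvature-type tensor. -/
noncomputable def ricci {n : ℕ} (R : Fin n → Fin n → Fin n → Fin n → ℂ) (i j : Fin n) : ℂ :=
  ∑ k, R i j k k

/-- The scalar curvature `r = Σ_i Re(Ric(i,i))` of a curvature-type tensor. -/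
noncomputable def scalarCurv {n : ℕ} (R : Fin n → Fin n → Fin n → Fin n → ℂ) : ℝ :=
  ∑ i, (ricci R i i).re

/-- `η` belongs to `H₀`, the real vector space of trace-free Hermitian `n × n` matrices
(identified with traceless real `(1,1)`-forms). -/
def MemH0 {n : ℕ} (η : Matrix (Fin n) (Fin n) ℂ) : Prop :=
  η.IsHermitian ∧ η.trace = 0

/-- The inner product `⟨η,τ⟩ = Re Tr(ητ)` on Hermitian matrices. -/
noncomputable def h0Inner {n : ℕ} (η τ : Matrix (Fin n) (Fin n) ℂ) : ℝ :=
  (Matrix.trace (η * τ)).re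

/-- The (real-valued) symmetric bilinear form `ℛ(η,τ) = Σ R(i,j,k,l)·η(j,i)·τ(l,k)`
induced by a curvature-type tensor on Hermitian matrices. -/
noncomputable def curvForm {n : ℕ} (R : Fin n → Fin n → Fin n → Fin n → ℂ)
    (η τ : Matrix (Fin n) (Fin n) ℂ) : ℝ :=
  (∑ i, ∑ j, ∑ k, ∑ l, R i j k l * η j i * τ l k).re

/-- The traceless bisectional curvature operator of `R` is nonnegative:
`ℛ(η,η) ≥ 0` for every `η ∈ H₀`. -/
def NonnegTBC {n : ℕ} (R : Fin n → Fin n → Fin n → Fin n → ℂ) : Prop :=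
  ∀ η : Matrix (Fin n) (Fin n) ℂ, MemH0 η → 0 ≤ curvForm R η η

/-- The traceless bisectional curvature operator of `R` is 2-nonnegative:
`ℛ(η,η) + ℛ(τ,τ) ≥ 0` for all orthonormal pairs `η, τ ∈ H₀`. -/
def TwoNonnegTBC {n : ℕ} (R : Fin n → Fin n → Fin n → Fin n → ℂ) : Prop :=
  ∀ η τ : Matrix (Fin n) (Fin n) ℂ, MemH0 η → MemH0 τ →
    h0Inner η η = 1 → h0Inner τ τ = 1 → h0Inner η τ = 0 →
    0 ≤ curvForm R η η + curvForm R τ τ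

/-!
On a real inner product space of dimension at least three, a bilinear form `B` that is
2-nonnegative on orthonormal pairs has nonnegative trace `T` and satisfies `|B(x,x)| ≤ T‖x‖²`:
extend `x/‖x‖` to an orthonormal basis; the remaining (at least two) diagonal entries have a
nonnegative sum, and any one of them together with `B(x,x)` is nonnegative.

We apply this to `ℛ` on `H₀`, realised inside `ℝ^{n×n×2}` through the real and imaginary parts of
the entries. The orthogonal projection onto `H₀` is `M ↦ ½(M + Mᴴ) - (Re tr M / n)·1`, and computing
the trace of `ℛ` through it on the standard basis gives `(1 - 1/n)·r`. Polarization and the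
decomposition `M = ℜ M + i ℑ M` then bound `ℛ` on all traceless complex matrices. Each component
`R(i,j,k,l)` is a value of `ℛ` on two elementary matrices, which are traceless off the diagonal;
a diagonal `E_ii` is made traceless by subtracting `E_ee` for a third index `e`, which exists
because `n ≥ 3`.
-/

open Module Matrix ComplexStarModule

theorem Finset.sum_nonneg_of_pairwise_add_nonneg {ι : Type*} [DecidableEq ι] {s : Finset ι}
    {t : ι → ℝ} (hs : 2 ≤ s.card) (h : ∀ i ∈ s, ∀ j ∈ s, i ≠ j → 0 ≤ t i + t j) :
    0 ≤ ∑ i ∈ s, t i := by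
  by_cases hall : ∀ i ∈ s, 0 ≤ t i
  · exact Finset.sum_nonneg hall
  push Not at hall
  obtain ⟨i, hi, hti⟩ := hall
  obtain ⟨j, hj, hji⟩ := Finset.exists_mem_ne hs i
  have hj' : j ∈ s.erase i := Finset.mem_erase.2 ⟨hji, hj⟩
  have hrest : 0 ≤ ∑ k ∈ (s.erase i).erase j, t k := Finset.sum_nonneg fun k hk => by
    have hki : k ≠ i := Finset.ne_of_mem_erase (Finset.mem_of_mem_erase hk)
    linarith [h k (Finset.mem_of_mem_erase (Finset.mem_of_mem_erase hk)) i hi hki]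
  rw [← Finset.add_sum_erase s t hi, ← Finset.add_sum_erase _ t hj']
  linarith [h i hi j hj hji.symm]

theorem Fintype.sum_sum_comm_sum_sum {α β M : Type*} [Fintype α] [Fintype β] [AddCommMonoid M]
    (f : α → α → β → β → M) :
    ∑ i, ∑ j, ∑ k, ∑ l, f i j k l = ∑ k, ∑ l, ∑ i, ∑ j, f i j k l := by
  calc _ = ∑ i, ∑ k, ∑ j, ∑ l, f i j k l := Fintype.sum_congr _ _ fun _ => Finset.sum_comm
    _ = ∑ k, ∑ i, ∑ j, ∑ l, f i j k l := Finset.sum_comm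
    _ = ∑ k, ∑ i, ∑ l, ∑ j, f i j k l :=
        Fintype.sum_congr _ _ fun _ => Fintype.sum_congr _ _ fun _ => Finset.sum_comm
    _ = _ := Fintype.sum_congr _ _ fun _ => Finset.sum_comm

section TwoNonneg

variable {F : Type*} [NormedAddCommGroup F] [InnerProductSpace ℝ F]

theorem abs_apply_self_le_of_norm_eq_one {B : F →ₗ[ℝ] F →ₗ[ℝ] ℝ} {T : ℝ}
    (h : ∀ x : F, ‖x‖ = 1 → |B x x| ≤ T) (x : F) :
    |B x x| ≤ T * ‖x‖ ^ 2 := by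
  rcases eq_or_ne x 0 with rfl | hx
  · simp
  have hxu : x = ‖x‖ • (‖x‖⁻¹ • x) := by
    rw [smul_smul, mul_inv_cancel₀ (norm_ne_zero_iff.2 hx), one_smul]
  have hBx : B x x = ‖x‖ ^ 2 * B (‖x‖⁻¹ • x) (‖x‖⁻¹ • x) := by
    conv_lhs => rw [hxu]
    simp only [map_smul, LinearMap.smul_apply, smul_eq_mul]
    ring
  rw [hBx, abs_mul, abs_of_nonneg (by positivity), mul_comm T]
  exact mul_le_mul_of_nonneg_left (h _ (norm_smul_inv_norm hx)) (by positivity)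

variable [FiniteDimensional ℝ F]

theorem exists_orthonormalBasis_apply_eq {ι : Type*} [Fintype ι]
    (hι : finrank ℝ F = Fintype.card ι) (i : ι) {x : F} (hx : ‖x‖ = 1) :
    ∃ f : OrthonormalBasis ι ℝ F, f i = x := by
  have hv : Orthonormal ℝ (({i} : Set ι).domRestrict fun _ => x) :=
    ⟨fun _ => hx, fun j k hjk => absurd (Subsingleton.elim j k) hjk⟩
  obtain ⟨f, hf⟩ := hv.exists_orthonormalBasis_extension_of_card_eq hι
  exact ⟨f, hf i rfl⟩

theorem abs_apply_self_le_of_two_nonneg {B : F →ₗ[ℝ] F →ₗ[ℝ] ℝ} {T : ℝ}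
    (hdim : 3 ≤ finrank ℝ F)
    (htrace : ∀ f : OrthonormalBasis (Fin (finrank ℝ F)) ℝ F, ∑ i, B (f i) (f i) = T)
    (h2 : ∀ x y : F, ‖x‖ = 1 → ‖y‖ = 1 → inner ℝ x y = 0 → 0 ≤ B x x + B y y) :
    0 ≤ T ∧ ∀ x, |B x x| ≤ T * ‖x‖ ^ 2 := by
  have hcard : finrank ℝ F = Fintype.card (Fin (finrank ℝ F)) := (Fintype.card_fin _).symm
  have hpair (f : OrthonormalBasis (Fin (finrank ℝ F)) ℝ F) (i j) (hij : i ≠ j) :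
      0 ≤ B (f i) (f i) + B (f j) (f j) :=
    h2 _ _ (f.orthonormal.1 i) (f.orthonormal.1 j) (f.orthonormal.2 hij)
  have hle (f : OrthonormalBasis (Fin (finrank ℝ F)) ℝ F) (i) : B (f i) (f i) ≤ T := by
    have hrest : 0 ≤ ∑ j ∈ Finset.univ.erase i, B (f j) (f j) :=
      Finset.sum_nonneg_of_pairwise_add_nonneg
        (by rw [Finset.card_erase_of_mem (Finset.mem_univ i), Finset.card_univ,
          Fintype.card_fin]; omega)
        fun j _ k _ hjk => hpair f j k hjk
    linarith [Finset.add_sum_erase Finset.univ (fun j => B (f j) (f j)) (Finset.mem_univ i),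
      htrace f]
  have hunit (x : F) (hx : ‖x‖ = 1) : |B x x| ≤ T := by
    let i₀ : Fin (finrank ℝ F) := ⟨0, by omega⟩
    let i₁ : Fin (finrank ℝ F) := ⟨1, by omega⟩
    obtain ⟨f, rfl⟩ := exists_orthonormalBasis_apply_eq hcard i₀ hx
    have := hpair f i₀ i₁ (by simp [i₀, i₁, Fin.ext_iff])
    exact abs_le.2 ⟨by linarith [hle f i₁], hle f i₀⟩
  have hT : 0 ≤ T := by
    have : Nontrivial F := Module.nontrivial_of_finrank_pos (R := ℝ) (by omega)
    obtain ⟨x, hx⟩ := exists_norm_eq F zero_le_one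
    exact (abs_nonneg _).trans (hunit x hx)
  exact ⟨hT, abs_apply_self_le_of_norm_eq_one hunit⟩

end TwoNonneg

theorem OrthonormalBasis.sum_apply_self_eq_sum_apply_starProjection {G ι κ : Type*}
    [NormedAddCommGroup G] [InnerProductSpace ℝ G] [Fintype ι] [Fintype κ]
    (W : Submodule ℝ G) [W.HasOrthogonalProjection] (b : OrthonormalBasis κ ℝ W)
    (e : OrthonormalBasis ι ℝ G) (B : G →ₗ[ℝ] G →ₗ[ℝ] ℝ) :
    ∑ i, B (b i) (b i) = ∑ j, B (e j) (W.starProjection (e j)) := by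
  have hexpand (x y : G) : B x y = ∑ j, inner ℝ (e j) x * B (e j) y := by
    conv_lhs => rw [← e.sum_repr' x]
    simp [map_sum, LinearMap.sum_apply]
  simp only [b.starProjection_eq_sum_rankOne, _root_.sum_apply,
    InnerProductSpace.rankOne_apply, map_sum, map_smul, smul_eq_mul]
  rw [Fintype.sum_congr _ _ fun i => hexpand (b i) (b i), Finset.sum_comm]
  simp [real_inner_comm]

theorem exists_ne_ne {α : Type*} [Fintype α] [DecidableEq α] (hα : 3 ≤ Fintype.card α)
    (a b : α) : ∃ c, c ≠ a ∧ c ≠ b := by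
  by_contra! h
  have hsub : (Finset.univ : Finset α) ⊆ {a, b} := fun c _ => by
    rcases eq_or_ne c a with rfl | hc
    · simp
    · simp [h c hc]
  have := (Finset.card_le_card hsub).trans Finset.card_le_two
  rw [Finset.card_univ] at this
  omega

section

variable {n : ℕ} {R : Fin n → Fin n → Fin n → Fin n → ℂ}

noncomputable def curvBilin (R : Fin n → Fin n → Fin n → Fin n → ℂ) :
    Matrix (Fin n) (Fin n) ℂ →ₗ[ℂ] Matrix (Fin n) (Fin n) ℂ →ₗ[ℂ] ℂ :=
  LinearMap.mk₂ ℂ (fun η τ => ∑ i, ∑ j, ∑ k, ∑ l, R i j k l * η j i * τ l k)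
    (fun _ _ _ => by simp only [Matrix.add_apply, mul_add, add_mul, Finset.sum_add_distrib])
    (fun _ _ _ => by simp only [Matrix.smul_apply, smul_eq_mul, Finset.mul_sum]; congr! 4; ring)
    (fun _ _ _ => by simp only [Matrix.add_apply, mul_add, Finset.sum_add_distrib])
    (fun _ _ _ => by simp only [Matrix.smul_apply, smul_eq_mul, Finset.mul_sum]; congr! 4; ring)

theorem re_curvBilin (η τ : Matrix (Fin n) (Fin n) ℂ) : (curvBilin R η τ).re = curvForm R η τ :=
  rfl

theorem curvBilin_single_left (a b : Fin n) (z : ℂ) (τ : Matrix (Fin n) (Fin n) ℂ) :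
    curvBilin R (single a b z) τ = z * ∑ k, ∑ l, R b a k l * τ l k := by
  simp [curvBilin, single_apply, ite_and, Finset.mul_sum, mul_comm, mul_left_comm]

theorem curvBilin_single_single (a b c d : Fin n) (z w : ℂ) :
    curvBilin R (single a b z) (single c d w) = z * w * R b a d c := by
  simp [curvBilin_single_left, single_apply, ite_and, mul_comm, mul_left_comm]

theorem curvBilin_single_one (a b : Fin n) (z : ℂ) :
    curvBilin R (single a b z) 1 = z * ricci R b a := by
  simp [curvBilin_single_left, one_apply, ricci]

theorem IsKahlerCurvTensor.apply_swap_pairs (hR : IsKahlerCurvTensor R) (i j k l : Fin n) :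
    R i j k l = R k l i j := by
  rw [hR.1, hR.2.1]

theorem curvBilin_comm (hR : IsKahlerCurvTensor R) (η τ : Matrix (Fin n) (Fin n) ℂ) :
    curvBilin R η τ = curvBilin R τ η := by
  simp only [curvBilin, LinearMap.mk₂_apply]
  calc _ = ∑ i, ∑ j, ∑ k, ∑ l, R k l i j * τ l k * η j i := by
        simp only [hR.apply_swap_pairs _ _ (_ : Fin n), mul_right_comm _ (η _ _)]
    _ = _ := Fintype.sum_sum_comm_sum_sum _

theorem conj_curvBilin (hR : IsKahlerCurvTensor R)
    {η τ : Matrix (Fin n) (Fin n) ℂ} (hη : η.IsHermitian) (hτ : τ.IsHermitian) :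
    starRingEnd ℂ (curvBilin R η τ) = curvBilin R η τ := by
  have hconj {M : Matrix (Fin n) (Fin n) ℂ} (hM : M.IsHermitian) (a b) :
      starRingEnd ℂ (M a b) = M b a := by
    simpa using congrFun (congrFun hM b) a
  simp only [curvBilin, LinearMap.mk₂_apply, map_sum, map_mul, hR.2.2, hconj hη, hconj hτ]
  rw [Finset.sum_comm]
  exact Fintype.sum_congr _ _ fun _ => Fintype.sum_congr _ _ fun _ => Finset.sum_comm

theorem curvBilin_eq_ofReal (hR : IsKahlerCurvTensor R)
    {η τ : Matrix (Fin n) (Fin n) ℂ} (hη : η.IsHermitian) (hτ : τ.IsHermitian) :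
    curvBilin R η τ = curvForm R η τ :=
  (Complex.conj_eq_iff_re.1 (conj_curvBilin hR hη hτ)).symm

noncomputable def coordEquiv (n : ℕ) :
    Matrix (Fin n) (Fin n) ℂ ≃ₗ[ℝ] EuclideanSpace ℝ (Fin n × Fin n × Fin 2) where
  toFun M := WithLp.toLp 2 fun q => ![(M q.1 q.2.1).re, (M q.1 q.2.1).im] q.2.2
  invFun x := Matrix.of fun a b => x (a, b, 0) + x (a, b, 1) * Complex.I
  map_add' M N := by ext ⟨a, b, ε⟩; fin_cases ε <;> simp
  map_smul' r M := by ext ⟨a, b, ε⟩; fin_cases ε <;> simp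
  left_inv M := by ext a b; simp
  right_inv x := by ext ⟨a, b, ε⟩; fin_cases ε <;> simp

theorem inner_coordEquiv (M N : Matrix (Fin n) (Fin n) ℂ) :
    inner ℝ (coordEquiv n M) (coordEquiv n N) = (trace (Mᴴ * N)).re := by
  rw [trace_mul_comm]
  simp [coordEquiv, PiLp.inner_apply, Fintype.sum_prod_type, Fin.sum_univ_two, trace, mul_apply,
    Complex.re_sum, Complex.mul_re, mul_comm]

theorem coordEquiv_symm_single (q : Fin n × Fin n × Fin 2) :
    (coordEquiv n).symm (EuclideanSpace.single q 1) = single q.1 q.2.1 (![1, Complex.I] q.2.2) := by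
  obtain ⟨a, b, ε⟩ := q
  ext x y
  fin_cases ε <;>
    simp [coordEquiv, single_apply, PiLp.single_apply, Prod.ext_iff, eq_comm, apply_ite]

def H0 (n : ℕ) : Submodule ℝ (Matrix (Fin n) (Fin n) ℂ) where
  carrier := {η | MemH0 η}
  add_mem' hη hτ := ⟨hη.1.add hτ.1, by rw [trace_add, hη.2, hτ.2, add_zero]⟩
  zero_mem' := ⟨isHermitian_zero, trace_zero _ _⟩
  smul_mem' r _ hη := ⟨hη.1.smul (IsSelfAdjoint.all r), by rw [trace_smul, hη.2, smul_zero]⟩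

theorem re_trace_conjTranspose_mul {M τ : Matrix (Fin n) (Fin n) ℂ} (hτ : τ.IsHermitian) :
    (trace (Mᴴ * τ)).re = (trace (M * τ)).re := by
  rw [← hτ, ← conjTranspose_mul, trace_conjTranspose, trace_mul_comm, hτ]
  simp

noncomputable def tracelessHermitianPart (M : Matrix (Fin n) (Fin n) ℂ) :
    Matrix (Fin n) (Fin n) ℂ :=
  (2⁻¹ : ℝ) • (M + Mᴴ) - (M.trace.re / n) • (1 : Matrix (Fin n) (Fin n) ℂ)

theorem tracelessHermitianPart_mem_H0 (hn : n ≠ 0) (M : Matrix (Fin n) (Fin n) ℂ) :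
    tracelessHermitianPart M ∈ H0 n := by
  refine ⟨((isHermitian_add_transpose_self M).smul (IsSelfAdjoint.all _)).sub
    (isHermitian_one.smul (IsSelfAdjoint.all _)), ?_⟩
  rw [tracelessHermitianPart, trace_sub, trace_smul, trace_smul, trace_add, trace_conjTranspose,
    RCLike.star_def, Complex.add_conj, trace_one, Fintype.card_fin]
  simp [hn]

theorem re_trace_conjTranspose_sub_tracelessHermitianPart_mul (M : Matrix (Fin n) (Fin n) ℂ)
    {τ : Matrix (Fin n) (Fin n) ℂ} (hτ : MemH0 τ) :
    (trace ((M - tracelessHermitianPart M)ᴴ * τ)).re = 0 := by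
  rw [re_trace_conjTranspose_mul hτ.1]
  simp [tracelessHermitianPart, sub_mul, add_mul, trace_sub, trace_add, trace_smul, hτ.2, ← two_mul,
    re_trace_conjTranspose_mul hτ.1]

theorem curvForm_single_tracelessHermitianPart_add (a b : Fin n) :
    curvForm R (single a b 1) (tracelessHermitianPart (single a b 1)) +
        curvForm R (single a b Complex.I) (tracelessHermitianPart (single a b Complex.I)) =
      (R b a a b).re - if a = b then (ricci R b a).re / n else 0 := by
  simp only [← re_curvBilin, tracelessHermitianPart, conjTranspose_single, map_sub,
    LinearMap.map_smul_of_tower, map_add, curvBilin_single_single, curvBilin_single_one,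
    Complex.real_smul, Complex.re_ofReal_mul, Complex.sub_re, Complex.add_re]
  simp only [mul_one, one_mul, star_one, RCLike.star_def, Complex.conj_I, Complex.I_mul_I,
    Complex.mul_re, Complex.mul_im, Complex.neg_re, Complex.neg_im, Complex.one_re, Complex.one_im,
    Complex.I_re, Complex.I_im]
  rcases eq_or_ne a b with rfl | hab
  · simp only [trace_single_eq_same, Complex.one_re, Complex.I_re, if_true]
    ring
  · simp only [trace_single_eq_of_ne _ _ _ hab, Complex.zero_re, if_neg hab]
    ring

theorem sum_curvForm_tracelessHermitianPart (hR : IsKahlerCurvTensor R) :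
    ∑ q : Fin n × Fin n × Fin 2, curvForm R (single q.1 q.2.1 (![1, Complex.I] q.2.2))
        (tracelessHermitianPart (single q.1 q.2.1 (![1, Complex.I] q.2.2))) =
      (1 - (n : ℝ)⁻¹) * scalarCurv R := by
  simp only [Fintype.sum_prod_type, Fin.sum_univ_two, Matrix.cons_val_zero, Matrix.cons_val_one,
    curvForm_single_tracelessHermitianPart_add, Finset.sum_sub_distrib, Finset.sum_ite_eq,
    Finset.mem_univ, if_true, hR.1 _ _ _ (_ : Fin n), ← Finset.sum_div]
  simp only [scalarCurv, ricci, Complex.re_sum]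
  ring

noncomputable def curvFormCoords (R : Fin n → Fin n → Fin n → Fin n → ℂ) :
    EuclideanSpace ℝ (Fin n × Fin n × Fin 2) →ₗ[ℝ]
      EuclideanSpace ℝ (Fin n × Fin n × Fin 2) →ₗ[ℝ] ℝ :=
  (((curvBilin R).restrictScalars₁₂ ℝ ℝ).compr₂ Complex.reLm).compl₁₂
    (coordEquiv n).symm.toLinearMap (coordEquiv n).symm.toLinearMap

theorem curvFormCoords_apply (x y : EuclideanSpace ℝ (Fin n × Fin n × Fin 2)) :
    curvFormCoords R x y = curvForm R ((coordEquiv n).symm x) ((coordEquiv n).symm y) := rfl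

noncomputable def H0coords (n : ℕ) : Submodule ℝ (EuclideanSpace ℝ (Fin n × Fin n × Fin 2)) :=
  (H0 n).map (coordEquiv n).toLinearMap

theorem starProjection_H0coords_single (hn : n ≠ 0) (q : Fin n × Fin n × Fin 2) :
    (H0coords n).starProjection (EuclideanSpace.single q 1) =
      coordEquiv n (tracelessHermitianPart (single q.1 q.2.1 (![1, Complex.I] q.2.2))) := by
  refine Submodule.eq_starProjection_of_mem_of_inner_eq_zero
    (Submodule.mem_map_of_mem (tracelessHermitianPart_mem_H0 hn _)) ?_
  rintro _ ⟨τ, hτ, rfl⟩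
  have hq : EuclideanSpace.single q 1 =
      coordEquiv n (single q.1 q.2.1 (![1, Complex.I] q.2.2)) := by
    rw [← coordEquiv_symm_single, LinearEquiv.apply_symm_apply]
  rw [hq, LinearEquiv.coe_coe, ← map_sub, inner_coordEquiv]
  exact re_trace_conjTranspose_sub_tracelessHermitianPart_mul _ hτ

theorem three_le_finrank_H0 (hn : 3 ≤ n) : 3 ≤ finrank ℝ (H0 n) := by
  let i : Fin 3 → Fin n := fun t => ⟨t, by omega⟩
  let pairs : Fin 3 → Fin n × Fin n := ![(i 0, i 1), (i 0, i 2), (i 1, i 2)]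
  let S (t : Fin 3) : Matrix (Fin n) (Fin n) ℂ :=
    single (pairs t).1 (pairs t).2 1 + single (pairs t).2 (pairs t).1 1
  have hS (t : Fin 3) : S t ∈ H0 n := by
    have hne : (pairs t).1 ≠ (pairs t).2 := by fin_cases t <;> simp [pairs, i, Fin.ext_iff]
    refine ⟨by simp [S, IsHermitian, add_comm], ?_⟩
    simp [S, trace_add, trace_single_eq_of_ne _ _ _ hne, trace_single_eq_of_ne _ _ _ hne.symm]
  have hli : LinearIndependent ℝ fun t => (⟨S t, hS t⟩ : H0 n) := by
    refine LinearIndependent.of_comp (H0 n).subtype (Fintype.linearIndependent_iff.2 fun g hg => ?_)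
    have h (a b : Fin n) := congrFun (congrFun hg a) b
    simp only [Fin.sum_univ_three, Function.comp_apply, Submodule.subtype_apply,
      Matrix.smul_apply, Matrix.add_apply, single_apply, S, pairs] at h
    intro t
    fin_cases t
    · simpa [i, Fin.ext_iff] using h (i 0) (i 1)
    · simpa [i, Fin.ext_iff] using h (i 0) (i 2)
    · simpa [i, Fin.ext_iff] using h (i 1) (i 2)
  simpa using hli.fintype_card_le_finrank

theorem inner_coordEquiv_of_mem_H0 {M : Matrix (Fin n) (Fin n) ℂ} (hM : M ∈ H0 n)
    (N : Matrix (Fin n) (Fin n) ℂ) : inner ℝ (coordEquiv n M) (coordEquiv n N) = h0Inner M N := by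
  rw [inner_coordEquiv, hM.1.eq, h0Inner]

theorem abs_curvForm_self_le (hn : 3 ≤ n) (hR : IsKahlerCurvTensor R) (h2 : TwoNonnegTBC R) :
    0 ≤ (1 - (n : ℝ)⁻¹) * scalarCurv R ∧ ∀ η, MemH0 η →
      |curvForm R η η| ≤ (1 - (n : ℝ)⁻¹) * scalarCurv R * h0Inner η η := by
  have hmem {x} : x ∈ H0coords n ↔ (coordEquiv n).symm x ∈ H0 n := Submodule.mem_map_equiv _
  have hinner (x y : H0coords n) :
      inner ℝ x y = h0Inner ((coordEquiv n).symm x) ((coordEquiv n).symm y) := by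
    rw [Submodule.coe_inner, ← inner_coordEquiv_of_mem_H0 (hmem.1 x.2),
      LinearEquiv.apply_symm_apply, LinearEquiv.apply_symm_apply]
  have hdim : 3 ≤ finrank ℝ (H0coords n) := by
    rw [H0coords, LinearEquiv.finrank_map_eq]
    exact three_le_finrank_H0 hn
  have htrace (f : OrthonormalBasis (Fin (finrank ℝ (H0coords n))) ℝ (H0coords n)) :
      ∑ i, curvFormCoords R (f i) (f i) = (1 - (n : ℝ)⁻¹) * scalarCurv R := by
    rw [f.sum_apply_self_eq_sum_apply_starProjection _ (EuclideanSpace.basisFun _ ℝ)]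
    simp only [EuclideanSpace.basisFun_apply, starProjection_H0coords_single (by omega : n ≠ 0),
      curvFormCoords_apply, LinearEquiv.symm_apply_apply, coordEquiv_symm_single]
    exact sum_curvForm_tracelessHermitianPart hR
  obtain ⟨hK, hbound⟩ := abs_apply_self_le_of_two_nonneg
    (B := (curvFormCoords R).compl₁₂ (H0coords n).subtype (H0coords n).subtype) hdim htrace
    (fun x y hx hy hxy => h2 _ _ (hmem.1 x.2) (hmem.1 y.2)
      ((hinner x x).symm.trans (by rw [real_inner_self_eq_norm_sq, hx, one_pow]))
      ((hinner y y).symm.trans (by rw [real_inner_self_eq_norm_sq, hy, one_pow]))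
      ((hinner x y).symm.trans hxy))
  refine ⟨hK, fun η hη => ?_⟩
  have := hbound ⟨coordEquiv n η, Submodule.mem_map_of_mem hη⟩
  rw [← real_inner_self_eq_norm_sq, hinner] at this
  simpa only [LinearMap.compl₁₂_apply, Submodule.subtype_apply, curvFormCoords_apply,
    LinearEquiv.symm_apply_apply] using this

section PartsOfMatrix

variable {M : Matrix (Fin n) (Fin n) ℂ}

theorem memH0_realPart (hM : trace M = 0) : MemH0 (ℜ M : Matrix (Fin n) (Fin n) ℂ) := by
  refine ⟨(ℜ M).2, ?_⟩
  rw [realPart_apply_coe, trace_smul, trace_add, hM, star_eq_conjTranspose, trace_conjTranspose, hM]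
  simp

theorem memH0_imaginaryPart (hM : trace M = 0) : MemH0 (ℑ M : Matrix (Fin n) (Fin n) ℂ) := by
  refine ⟨(ℑ M).2, ?_⟩
  rw [imaginaryPart_apply_coe, trace_smul, trace_smul, trace_sub, hM, star_eq_conjTranspose,
    trace_conjTranspose, hM]
  simp

theorem h0Inner_realPart_add_h0Inner_imaginaryPart (M : Matrix (Fin n) (Fin n) ℂ) :
    h0Inner (ℜ M : Matrix (Fin n) (Fin n) ℂ) (ℜ M) +
        h0Inner (ℑ M : Matrix (Fin n) (Fin n) ℂ) (ℑ M) =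
      (trace (Mᴴ * M)).re := by
  simp only [h0Inner, realPart_apply_coe, imaginaryPart_apply_coe, star_eq_conjTranspose,
    smul_mul_smul_comm, mul_add, add_mul, mul_sub, sub_mul, trace_smul, trace_add, trace_sub]
  rw [trace_mul_comm M Mᴴ, neg_mul_neg, Complex.I_mul_I, neg_one_smul]
  simp only [Complex.add_re, Complex.neg_re, Complex.smul_re, Complex.sub_re, smul_eq_mul]
  ring

end PartsOfMatrix

section Bounds

variable {K : ℝ}

theorem abs_curvForm_le_of_abs_curvForm_self_le (hR : IsKahlerCurvTensor R)
    (hQ : ∀ η, MemH0 η → |curvForm R η η| ≤ K * h0Inner η η)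
    {η τ : Matrix (Fin n) (Fin n) ℂ} (hη : MemH0 η) (hτ : MemH0 τ) :
    |curvForm R η τ| ≤ K * (h0Inner η η + h0Inner τ τ) / 2 := by
  have hplus := hQ (η + τ) ((H0 n).add_mem hη hτ)
  have hminus := hQ (η - τ) ((H0 n).sub_mem hη hτ)
  simp only [← re_curvBilin, map_add, map_sub, LinearMap.add_apply, LinearMap.sub_apply,
    Complex.add_re, Complex.sub_re, curvBilin_comm hR τ η] at hplus hminus
  simp only [h0Inner, add_mul, mul_add, sub_mul, mul_sub, trace_add, trace_sub, Complex.add_re,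
    Complex.sub_re, trace_mul_comm τ η] at hplus hminus
  rw [abs_le] at hplus hminus ⊢
  rw [h0Inner, h0Inner, ← re_curvBilin]
  constructor <;> linarith [hplus.1, hplus.2, hminus.1, hminus.2]

theorem norm_curvBilin_le (hR : IsKahlerCurvTensor R)
    (hK : ∀ η τ, MemH0 η → MemH0 τ → |curvForm R η τ| ≤ K * (h0Inner η η + h0Inner τ τ) / 2)
    {M N : Matrix (Fin n) (Fin n) ℂ} (hM : trace M = 0) (hN : trace N = 0) :
    ‖curvBilin R M N‖ ≤ K * ((trace (Mᴴ * M)).re + (trace (Nᴴ * N)).re) := by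
  have hbound {η τ} (hη : MemH0 η) (hτ : MemH0 τ) :
      ‖curvBilin R η τ‖ ≤ K * (h0Inner η η + h0Inner τ τ) / 2 := by
    rw [curvBilin_eq_ofReal hR hη.1 hτ.1, Complex.norm_real, Real.norm_eq_abs]
    exact hK η τ hη hτ
  have h1 := hbound (memH0_realPart hM) (memH0_realPart hN)
  have h2 := hbound (memH0_realPart hM) (memH0_imaginaryPart hN)
  have h3 := hbound (memH0_imaginaryPart hM) (memH0_realPart hN)
  have h4 := hbound (memH0_imaginaryPart hM) (memH0_imaginaryPart hN)
  rw [← h0Inner_realPart_add_h0Inner_imaginaryPart M,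
    ← h0Inner_realPart_add_h0Inner_imaginaryPart N]
  conv_lhs => rw [← realPart_add_I_smul_imaginaryPart M, ← realPart_add_I_smul_imaginaryPart N]
  simp only [map_add, map_smul, LinearMap.add_apply, LinearMap.smul_apply, smul_eq_mul]
  set a := curvBilin R (ℜ M) (ℜ N)
  set b := curvBilin R (ℑ M) (ℜ N)
  set c := curvBilin R (ℜ M) (ℑ N)
  set d := curvBilin R (ℑ M) (ℑ N)
  have e1 := norm_add_le (a + Complex.I * b) (Complex.I * (c + Complex.I * d))
  have e2 := norm_add_le a (Complex.I * b)
  have e3 := norm_add_le c (Complex.I * d)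
  simp only [norm_mul, Complex.norm_I, one_mul] at e1 e2 e3
  linarith

end Bounds
theorem trace_single_sub_single (a b : Fin n) : trace (single a a (1 : ℂ) - single b b 1) = 0 := by
  rw [trace_sub, trace_single_eq_same, trace_single_eq_same, sub_self]

theorem re_trace_conjTranspose_mul_self_single (a b : Fin n) :
    (trace ((single a b (1 : ℂ))ᴴ * single a b 1)).re = 1 := by
  simp [single_mul_single_same, trace_single_eq_same]

theorem re_trace_conjTranspose_mul_self_single_sub_single_le (a b : Fin n) :
    (trace ((single a a (1 : ℂ) - single b b 1)ᴴ * (single a a 1 - single b b 1))).re ≤ 2 := by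
  rcases eq_or_ne a b with rfl | hab
  · simp
  · norm_num [sub_mul, mul_sub, single_mul_single_same, single_mul_single_of_ne _ _ _ _ hab,
      single_mul_single_of_ne _ _ _ _ hab.symm, trace_single_eq_same]

section ComponentBounds

variable {K : ℝ} (hK0 : 0 ≤ K)
  (hK : ∀ M N : Matrix (Fin n) (Fin n) ℂ, trace M = 0 → trace N = 0 →
    ‖curvBilin R M N‖ ≤ K * ((trace (Mᴴ * M)).re + (trace (Nᴴ * N)).re))
include hK0 hK

theorem norm_curvBilin_le_of_le {M N : Matrix (Fin n) (Fin n) ℂ} (hM : trace M = 0)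
    (hN : trace N = 0) {m m' : ℝ} (hm : (trace (Mᴴ * M)).re ≤ m) (hm' : (trace (Nᴴ * N)).re ≤ m') :
    ‖curvBilin R M N‖ ≤ K * (m + m') :=
  (hK M N hM hN).trans (by gcongr)

theorem norm_apply_le_of_ne_of_ne {i j k l : Fin n} (hij : i ≠ j) (hkl : k ≠ l) :
    ‖R i j k l‖ ≤ 2 * K := by
  have := norm_curvBilin_le_of_le hK0 hK (trace_single_eq_of_ne _ _ 1 hij.symm)
    (trace_single_eq_of_ne _ _ 1 hkl.symm) (re_trace_conjTranspose_mul_self_single j i).le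
    (re_trace_conjTranspose_mul_self_single l k).le
  rw [curvBilin_single_single, one_mul, one_mul] at this
  linarith

theorem norm_apply_self_self_le (hR : IsKahlerCurvTensor R) (hn : 3 ≤ n) (i : Fin n) {k l : Fin n}
    (hkl : k ≠ l) : ‖R i i k l‖ ≤ 5 * K := by
  obtain ⟨e, hek, hel⟩ := exists_ne_ne (by simpa using hn) k l
  set X := curvBilin R (single i i 1 - single e e 1) (single l k 1)
  have hsplit : R i i k l = X + R k e e l := by
    simp only [X, map_sub, LinearMap.sub_apply, curvBilin_single_single, hR.1 e e k l]
    ring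
  have hX : ‖X‖ ≤ K * (2 + 1) :=
    norm_curvBilin_le_of_le hK0 hK (trace_single_sub_single i e)
      (trace_single_eq_of_ne _ _ 1 hkl.symm)
      (re_trace_conjTranspose_mul_self_single_sub_single_le i e)
      (re_trace_conjTranspose_mul_self_single l k).le
  rw [hsplit]
  linarith [norm_add_le X (R k e e l), norm_apply_le_of_ne_of_ne hK0 hK hek.symm hel]

theorem norm_apply_self_self_self_self_le (hR : IsKahlerCurvTensor R) (hn : 3 ≤ n) (a : Fin n) :
    ‖R a a a a‖ ≤ 10 * K := by
  obtain ⟨b, hba, -⟩ := exists_ne_ne (by simpa using hn) a a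
  obtain ⟨e, hea, heb⟩ := exists_ne_ne (by simpa using hn) a b
  set X := curvBilin R (single a a 1 - single e e 1) (single a a 1 - single b b 1)
  have hsplit : R a a a a = X + R b a a b - R b e e b + R a e e a := by
    simp only [X, map_sub, LinearMap.sub_apply, curvBilin_single_single, hR.1 a a b b,
      hR.1 e e a a, hR.1 e e b b]
    ring
  have hX : ‖X‖ ≤ K * (2 + 2) := norm_curvBilin_le_of_le hK0 hK (trace_single_sub_single a e)
    (trace_single_sub_single a b) (re_trace_conjTranspose_mul_self_single_sub_single_le a e)
    (re_trace_conjTranspose_mul_self_single_sub_single_le a b)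
  rw [hsplit]
  linarith [norm_add_le (X + R b a a b - R b e e b) (R a e e a),
    norm_sub_le (X + R b a a b) (R b e e b), norm_add_le X (R b a a b),
    norm_apply_le_of_ne_of_ne hK0 hK hba hba.symm, norm_apply_le_of_ne_of_ne hK0 hK heb.symm heb,
    norm_apply_le_of_ne_of_ne hK0 hK hea.symm hea]

theorem norm_apply_le (hR : IsKahlerCurvTensor R) (hn : 3 ≤ n) (i j k l : Fin n) :
    ‖R i j k l‖ ≤ 10 * K := by
  rcases eq_or_ne i j with rfl | hij <;> rcases eq_or_ne k l with rfl | hkl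
  · rcases eq_or_ne i k with rfl | hik
    · exact norm_apply_self_self_self_self_le hK0 hK hR hn i
    · rw [hR.1]
      linarith [norm_apply_le_of_ne_of_ne hK0 hK hik.symm hik]
  · linarith [norm_apply_self_self_le hK0 hK hR hn i hkl]
  · rw [hR.apply_swap_pairs]
    linarith [norm_apply_self_self_le hK0 hK hR hn k hij]
  · linarith [norm_apply_le_of_ne_of_ne hK0 hK hij hkl]

end ComponentBounds

end

/-- Theorem 1.2, main estimate (pointwise form): there is a dimensional constant `C n > 0`
such that for every `n ≥ 3` and every Kähler curvature-type tensor with 2-nonnegative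
traceless bisectional curvature operator, the scalar curvature `r` is nonnegative and
`|R(i,j,k,l)| ≤ C n · r` for all indices. -/
theorem bisectional_bounded_by_scalar :
    ∃ C : ℕ → ℝ, (∀ n, 0 < C n) ∧
      ∀ (n : ℕ), 3 ≤ n → ∀ R : Fin n → Fin n → Fin n → Fin n → ℂ,
        IsKahlerCurvTensor R → TwoNonnegTBC R →
        0 ≤ scalarCurv R ∧
        ∀ i j k l : Fin n, ‖R i j k l‖ ≤ C n * scalarCurv R := by
  refine ⟨fun _ => 10, fun _ => by norm_num, fun n hn R hR h2 => ?_⟩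
  obtain ⟨hK0, hQ⟩ := abs_curvForm_self_le hn hR h2
  have hK (M N : Matrix (Fin n) (Fin n) ℂ) (hM : trace M = 0) (hN : trace N = 0) :=
    norm_curvBilin_le hR (fun _ _ => abs_curvForm_le_of_abs_curvForm_self_le hR hQ) hM hN
  have hn' : 0 < 1 - (n : ℝ)⁻¹ :=
    sub_pos.2 (inv_lt_one_of_one_lt₀ (by exact_mod_cast (by omega : 1 < n)))
  have hr : 0 ≤ scalarCurv R := nonneg_of_mul_nonneg_right hK0 hn'
  refine ⟨hr, fun i j k l => (norm_apply_le hK0 hK hR hn i j k l).trans ?_⟩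
  nlinarith [inv_nonneg.2 (n.cast_nonneg : (0 : ℝ) ≤ n)]
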